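/- Graph halving lemma: Let G and D be finite connected unit-conductance graphs such that G is 'star-type': its edge set is partitioned into edges (x, y) from a set of centers x to midpoints y, where each edge (x,y) of G corresponds to exactly two edges (x, y₊), (x, y₋) of D (same centers x, and D's vertex set consists of the centers together with the endpoint pairs {y₊, y₋}). Suppose boundary sets A^G, B^G of G consist of midpoints y and the corresponding boundary sets A^D, B^D of D consist of the corresponding endpoints y₊, y₋. Then the effective resistances satisfy R_G(A^G, B^G) = 2·R_D(A^D, B^D). -/

import Mathlib

/-!
Copying the value of each midpoint `y` to both endpoints `(y, true)`, `(y, false)` turns a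
feasible potential on `G` into one on `D` with exactly twice the energy. Conversely, giving `y`
the average of its two endpoint values turns a feasible potential on `D` into one on `G` with at
most half the energy, by convexity of the square on each pair of edges `(x, y₊)`, `(x, y₋)`.
Hence the two infima differ by the factor `2`, and inverting gives the resistances.
-/

open Sum

/-- Energy on the star-type graph `G` with centers `X` and midpoint vertices `Y`:
each edge `(x,y)` with `e x y = true` contributes `(u x - u y)²` (unit conductances). -/
def starEnergyG {X Y : Type*} [Fintype X] [Fintype Y] (e : X → Y → Bool)
    (u : X ⊕ Y → ℝ) : ℝ :=
  ∑ x : X, ∑ y : Y, if e x y then (u (inl x) - u (inr y)) ^ 2 else 0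

/-- Energy on the doubled graph `D`, where each midpoint `y` is replaced by the pair of
endpoints `(y, b)`, `b : Bool`, each joined to the same centers. -/
def starEnergyD {X Y : Type*} [Fintype X] [Fintype Y] (e : X → Y → Bool)
    (u : X ⊕ (Y × Bool) → ℝ) : ℝ :=
  ∑ x : X, ∑ y : Y, ∑ b : Bool, if e x y then (u (inl x) - u (inr (y, b))) ^ 2 else 0

/-- Adjacency on the vertex set of the star graph `G`. -/
def starAdj {X Y : Type*} (e : X → Y → Bool) (p q : X ⊕ Y) : Prop :=
  ∃ x y, e x y ∧ ((p = inl x ∧ q = inr y) ∨ (p = inr y ∧ q = inl x))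

lemma Real.sInf_eq_mul_of_forall_mul_mem {S T : Set ℝ} {c : ℝ} (hc : 0 < c)
    (hS : BddBelow S) (hT : BddBelow T) (hST : ∀ s ∈ S, c * s ∈ T)
    (hTS : ∀ t ∈ T, ∃ s ∈ S, c * s ≤ t) : sInf T = c * sInf S := by
  -- if `S = ∅` then `T = ∅`, and both infima are the junk value `0`
  rcases S.eq_empty_or_nonempty with rfl | hSne
  · have : T = ∅ := Set.eq_empty_of_forall_notMem fun t ht => by
      obtain ⟨s, hs, -⟩ := hTS t ht
      exact hs
    simp [this]
  obtain ⟨s₀, hs₀⟩ := hSne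
  apply le_antisymm
  · have : sInf T / c ≤ sInf S := le_csInf ⟨s₀, hs₀⟩ fun s hs => by
      rw [div_le_iff₀' hc]
      exact csInf_le hT (hST s hs)
    rwa [div_le_iff₀' hc] at this
  · refine le_csInf ⟨_, hST s₀ hs₀⟩ fun t ht => ?_
    obtain ⟨s, hs, hst⟩ := hTS t ht
    exact (mul_le_mul_of_nonneg_left (csInf_le hS hs) hc.le).trans hst

lemma two_mul_sq_average_sub_le (a b c : ℝ) :
    2 * (c - (a + b) / 2) ^ 2 ≤ (c - a) ^ 2 + (c - b) ^ 2 := by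
  nlinarith [sq_nonneg (a - b)]

section StarGraph

variable {X Y : Type*} [Fintype X] [Fintype Y] (e : X → Y → Bool)

lemma starEnergyG_nonneg (u : X ⊕ Y → ℝ) : 0 ≤ starEnergyG e u :=
  Finset.sum_nonneg fun _ _ => Finset.sum_nonneg fun _ _ => by split_ifs <;> positivity

lemma starEnergyD_nonneg (u : X ⊕ (Y × Bool) → ℝ) : 0 ≤ starEnergyD e u :=
  Finset.sum_nonneg fun _ _ => Finset.sum_nonneg fun _ _ =>
    Finset.sum_nonneg fun _ _ => by split_ifs <;> positivity

def doublePotential (u : X ⊕ Y → ℝ) : X ⊕ (Y × Bool) → ℝ :=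
  u ∘ Sum.map id Prod.fst

noncomputable def averagePotential (u : X ⊕ (Y × Bool) → ℝ) : X ⊕ Y → ℝ :=
  Sum.elim (u ∘ inl) fun y => (u (inr (y, true)) + u (inr (y, false))) / 2

lemma starEnergyD_doublePotential (u : X ⊕ Y → ℝ) :
    starEnergyD e (doublePotential u) = 2 * starEnergyG e u := by
  simp only [starEnergyD, starEnergyG, doublePotential, Finset.mul_sum, Fintype.sum_bool,
    Function.comp_apply, Sum.map_inl, Sum.map_inr, id]
  refine Finset.sum_congr rfl fun x _ => Finset.sum_congr rfl fun y _ => ?_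
  split_ifs <;> ring

lemma two_mul_starEnergyG_averagePotential_le (u : X ⊕ (Y × Bool) → ℝ) :
    2 * starEnergyG e (averagePotential u) ≤ starEnergyD e u := by
  simp only [starEnergyD, starEnergyG, averagePotential, Finset.mul_sum, Fintype.sum_bool,
    Function.comp_apply, Sum.elim_inl, Sum.elim_inr]
  refine Finset.sum_le_sum fun x _ => Finset.sum_le_sum fun y _ => ?_
  split_ifs
  · exact two_mul_sq_average_sub_le _ _ _
  · norm_num

variable (A B : Finset Y)

def feasibleEnergiesG : Set ℝ :=
  {E : ℝ | ∃ u : X ⊕ Y → ℝ,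
    (∀ y ∈ A, u (inr y) = 0) ∧ (∀ y ∈ B, u (inr y) = 1) ∧ E = starEnergyG e u}

def feasibleEnergiesD : Set ℝ :=
  {E : ℝ | ∃ u : X ⊕ (Y × Bool) → ℝ,
    (∀ y ∈ A, ∀ b : Bool, u (inr (y, b)) = 0) ∧
    (∀ y ∈ B, ∀ b : Bool, u (inr (y, b)) = 1) ∧ E = starEnergyD e u}

lemma bddBelow_feasibleEnergiesG : BddBelow (feasibleEnergiesG e A B) :=
  ⟨0, by rintro _ ⟨u, -, -, rfl⟩; exact starEnergyG_nonneg e u⟩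

lemma bddBelow_feasibleEnergiesD : BddBelow (feasibleEnergiesD e A B) :=
  ⟨0, by rintro _ ⟨u, -, -, rfl⟩; exact starEnergyD_nonneg e u⟩

lemma two_mul_mem_feasibleEnergiesD {E : ℝ} (hE : E ∈ feasibleEnergiesG e A B) :
    2 * E ∈ feasibleEnergiesD e A B := by
  obtain ⟨u, huA, huB, rfl⟩ := hE
  exact ⟨doublePotential u, fun y hy _ => huA y hy, fun y hy _ => huB y hy,
    (starEnergyD_doublePotential e u).symm⟩

lemma exists_two_mul_le_of_mem_feasibleEnergiesD {E : ℝ} (hE : E ∈ feasibleEnergiesD e A B) :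
    ∃ E' ∈ feasibleEnergiesG e A B, 2 * E' ≤ E := by
  obtain ⟨u, huA, huB, rfl⟩ := hE
  refine ⟨_, ⟨averagePotential u, fun y hy => ?_, fun y hy => ?_, rfl⟩,
    two_mul_starEnergyG_averagePotential_le e u⟩ <;>
    simp [averagePotential, huA, huB, hy]

lemma sInf_feasibleEnergiesD :
    sInf (feasibleEnergiesD e A B) = 2 * sInf (feasibleEnergiesG e A B) :=
  Real.sInf_eq_mul_of_forall_mul_mem two_pos (bddBelow_feasibleEnergiesG e A B)
    (bddBelow_feasibleEnergiesD e A B) (fun _ => two_mul_mem_feasibleEnergiesD e A B)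
    (fun _ => exists_two_mul_le_of_mem_feasibleEnergiesD e A B)

end StarGraph

theorem star_graph_halving_general {X Y : Type*} [Fintype X] [Fintype Y] (e : X → Y → Bool)
    (A B : Finset Y) :
    (sInf {E : ℝ | ∃ u : X ⊕ Y → ℝ,
        (∀ y ∈ A, u (inr y) = 0) ∧ (∀ y ∈ B, u (inr y) = 1) ∧ E = starEnergyG e u})⁻¹
      = 2 * (sInf {E : ℝ | ∃ u : X ⊕ (Y × Bool) → ℝ,
        (∀ y ∈ A, ∀ b : Bool, u (inr (y, b)) = 0) ∧
        (∀ y ∈ B, ∀ b : Bool, u (inr (y, b)) = 1) ∧ E = starEnergyD e u})⁻¹ := by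
  change (sInf (feasibleEnergiesG e A B))⁻¹ = 2 * (sInf (feasibleEnergiesD e A B))⁻¹
  rw [sInf_feasibleEnergiesD, mul_inv, ← mul_assoc, mul_inv_cancel₀ two_ne_zero, one_mul]

/-- graph halving lemma: for a connected star-type graph `G` with boundary
midpoint sets `A, B` (disjoint, nonempty) and the doubled graph `D` with the corresponding
endpoint boundary sets, the effective resistances satisfy `R_G = 2·R_D`, where
`R⁻¹ = inf` of the respective Dirichlet energies over feasible potentials. -/
theorem star_graph_halving {X Y : Type*} [Fintype X] [Fintype Y] (e : X → Y → Bool)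
    (hconn : ∀ p q : X ⊕ Y, Relation.ReflTransGen (starAdj e) p q)
    (A B : Finset Y) (hAB : Disjoint A B) (hA : A.Nonempty) (hB : B.Nonempty) :
    (sInf {E : ℝ | ∃ u : X ⊕ Y → ℝ,
        (∀ y ∈ A, u (inr y) = 0) ∧ (∀ y ∈ B, u (inr y) = 1) ∧ E = starEnergyG e u})⁻¹
      = 2 * (sInf {E : ℝ | ∃ u : X ⊕ (Y × Bool) → ℝ,
        (∀ y ∈ A, ∀ b : Bool, u (inr (y, b)) = 0) ∧
        (∀ y ∈ B, ∀ b : Bool, u (inr (y, b)) = 1) ∧ E = starEnergyD e u})⁻¹ :=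
  star_graph_halving_general e A B
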